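/- arXiv:2007.06052 — 3 statements merged into one kernel-verified Lean document; each statement's English description precedes it below -/
import Mathlib

section
/- Let a, b ∈ ℝ with 0 ≤ a, and let f : ℝ → ℝ be antitone (nonincreasing) on [0, a] with f(a) ≤ b. Then the 'rising staircase' region R = {(x, y) ∈ ℝ² : 0 ≤ x ≤ a ∧ f(x) ≤ y ≤ b} is star-shaped with star center (a, b); that is, for every point p ∈ R, the closed segment from (a, b) to p is contained in R. -/
theorem staircase_star_shaped (a b : ℝ) (ha : 0 ≤ a) (f : ℝ → ℝ)
    (hf : AntitoneOn f (Set.Icc 0 a)) (hfa : f a ≤ b) :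
    ∀ p ∈ {q : ℝ × ℝ | 0 ≤ q.1 ∧ q.1 ≤ a ∧ f q.1 ≤ q.2 ∧ q.2 ≤ b},
      segment ℝ (a, b) p ⊆
        {q : ℝ × ℝ | 0 ≤ q.1 ∧ q.1 ≤ a ∧ f q.1 ≤ q.2 ∧ q.2 ≤ b} := by
  rintro ⟨px, py⟩ ⟨hx0, hxa, hfy, hyb⟩ q ⟨u, v, hu, hv, huv, rfl⟩
  dsimp only at hx0 hxa hfy hyb
  simp only [Prod.smul_mk, Prod.mk_add_mk, smul_eq_mul, Set.mem_setOf_eq]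
  have hx1 : px ≤ u * a + v * px := by nlinarith
  have hx2 : u * a + v * px ≤ a := by nlinarith
  have hpy : u * py + v * py = py := by rw [← add_mul, huv, one_mul]
  have hpb : u * b + v * b = b := by rw [← add_mul, huv, one_mul]
  have hy1 : py ≤ u * b + v * py := by linarith [mul_nonneg hu (sub_nonneg.2 hyb), hpy]
  have hy2 : u * b + v * py ≤ b := by linarith [mul_nonneg hv (sub_nonneg.2 hyb), hpb]
  refine ⟨by linarith, hx2, ?_, hy2⟩
  have hmem : u * a + v * px ∈ Set.Icc (0:ℝ) a := ⟨by linarith, hx2⟩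
  have := hf ⟨hx0, hxa⟩ hmem hx1
  linarith
end

section
/- Let a, b ∈ ℝ with 0 ≤ a, and let f : ℝ → ℝ be antitone on [0, a] with f(a) ≤ b. Let R = {(x, y) ∈ ℝ² : 0 ≤ x ≤ a ∧ f(x) ≤ y ≤ b}. Then a guard at g = (a, b) with 180° field of vision given by the closed half-plane H = {(x, y) : y ≤ b} sees every point of R: for every p ∈ R, the segment [g, p] is contained in R ∩ H. -/
theorem staircase_guard_halfplane (a b : ℝ) (ha : 0 ≤ a) (f : ℝ → ℝ)
    (hf : AntitoneOn f (Set.Icc 0 a)) (hfa : f a ≤ b) :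
    ∀ p ∈ {q : ℝ × ℝ | 0 ≤ q.1 ∧ q.1 ≤ a ∧ f q.1 ≤ q.2 ∧ q.2 ≤ b},
      segment ℝ (a, b) p ⊆
        {q : ℝ × ℝ | 0 ≤ q.1 ∧ q.1 ≤ a ∧ f q.1 ≤ q.2 ∧ q.2 ≤ b} ∩
          {q : ℝ × ℝ | q.2 ≤ b} := by
  rintro ⟨p1, p2⟩ ⟨hp1, hp1a, hfp, hp2b⟩ q ⟨u, v, hu, hv, huv, rfl⟩
  simp only at hp1 hp1a hfp hp2b
  simp only [Prod.smul_mk, Prod.mk_add_mk, smul_eq_mul, Set.mem_inter_iff,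
    Set.mem_setOf_eq]
  have hx0 : 0 ≤ u * a + v * p1 := by positivity
  have hua : u * a + v * a = a := by rw [← add_mul, huv, one_mul]
  have hub : u * b + v * b = b := by rw [← add_mul, huv, one_mul]
  have hup1 : u * p1 + v * p1 = p1 := by rw [← add_mul, huv, one_mul]
  have hup2 : u * p2 + v * p2 = p2 := by rw [← add_mul, huv, one_mul]
  have hxa : u * a + v * p1 ≤ a := by nlinarith [mul_nonneg hv (sub_nonneg.2 hp1a)]
  have hyb : u * b + v * p2 ≤ b := by nlinarith [mul_nonneg hv (sub_nonneg.2 hp2b)]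
  have hp1x : p1 ≤ u * a + v * p1 := by nlinarith [mul_nonneg hu (sub_nonneg.2 hp1a)]
  have hp2y : p2 ≤ u * b + v * p2 := by nlinarith [mul_nonneg hu (sub_nonneg.2 hp2b)]
  have hfq : f (u * a + v * p1) ≤ u * b + v * p2 :=
    le_trans (le_trans (hf ⟨hp1, hp1a⟩ ⟨hx0, hxa⟩ hp1x) hfp) hp2y
  exact ⟨⟨hx0, hxa, hfq, hyb⟩, hyb⟩
end

section
/- Let S ⊆ ℝ² and h > 0, and let B = {(x, y, z) : (x, y) ∈ S ∧ 0 ≤ z ≤ h} be the vertical prism (building) over S. Let g, p ∈ ℝ³ with g.z ≥ 0 and p.z ≥ 0, and let p' = (p.x, p.y, 0). If the segment [g, p] intersects B, then the segment [g, p'] also intersects B. -/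
theorem prism_blocks_projection (S : Set (ℝ × ℝ)) (h : ℝ) (hh : 0 < h)
    (g p : ℝ × ℝ × ℝ) (hg : 0 ≤ g.2.2) (hp : 0 ≤ p.2.2)
    (hmeet : (segment ℝ g p ∩
      {q : ℝ × ℝ × ℝ | (q.1, q.2.1) ∈ S ∧ 0 ≤ q.2.2 ∧ q.2.2 ≤ h}).Nonempty) :
    (segment ℝ g (p.1, p.2.1, 0) ∩
      {q : ℝ × ℝ × ℝ | (q.1, q.2.1) ∈ S ∧ 0 ≤ q.2.2 ∧ q.2.2 ≤ h}).Nonempty := by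
  obtain ⟨q, ⟨a, b, ha, hb, hab, rfl⟩, hS, h0, hhle⟩ := hmeet
  refine ⟨a • g + b • (p.1, p.2.1, 0), ⟨a, b, ha, hb, hab, rfl⟩, ?_, ?_, ?_⟩
  · simpa [Prod.smul_def, Prod.add_def] using hS
  · simp only [Prod.smul_def, Prod.add_def, smul_eq_mul]
    have : (0:ℝ) ≤ a * g.2.2 := mul_nonneg ha hg
    simpa using this
  · simp only [Prod.smul_def, Prod.add_def, smul_eq_mul] at *
    have : a * g.2.2 + b * 0 ≤ a * g.2.2 + b * p.2.2 := by
      nlinarith [mul_nonneg hb hp]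
    exact le_trans (by simpa using this) hhle
end
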